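/- Fix g > 1, ω > 1, γ ≥ 1, η ∈ (0,1). Define for μ > 1: I_AB(μ) := (1/2)·log₂( V_A(μ)/(V_A(μ) − gη(μ²−1)/(gμ+(g−1)ω)) ) with V_A(μ) = ημ+(1−η)γ; χ_AE(μ) := S_T(μ) − S_C(μ) with S_T(μ) = h(ν₁(μ))+h(ν₂(μ)) for the symplectic eigenvalues of [[((g−1)μ+gω)I, √(g(ω²−1))Z],[√(g(ω²−1))Z, ωI]], and S_C(μ) = h(ν̄₁(μ))+h(ν̄₂(μ)) for the symplectic eigenvalues of V_{E′e}(μ) − (1/V_A(μ))·u(μ)u(μ)ᵀ, u(μ) = (√((g−1)η(μ²−1)),0,0,0)ᵀ. Then I_AB(μ) − χ_AE(μ) converges as μ → ∞ to R▶(g,ω,η,γ) := (1/2)·log₂( g·[gηω + γ(g−1)(1−η)] / ( (g−1)·[gγ(1−η) + ηω(g−1)] ) ) + h( √( ω·[gη + γω(g−1)(1−η)] / (gηω + γ(g−1)(1−η)) ) ) − h(ω). -/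

import Mathlib

open Real Filter Matrix Polynomial

/-- The standard two-mode symplectic form `Ω₂`. -/
noncomputable def Omega2 : Matrix (Fin 4) (Fin 4) ℝ :=
  !![0, 1, 0, 0; -1, 0, 0, 0; 0, 0, 0, 1; 0, 0, -1, 0]

/-- Eve's total covariance matrix
`V_{E′e}(μ) = [[((g−1)μ+gω)I, √(g(ω²−1))Z],[√(g(ω²−1))Z, ωI]]`. -/
noncomputable def VEe (g ω μ : ℝ) : Matrix (Fin 4) (Fin 4) ℝ :=
  !![(g - 1) * μ + g * ω, 0, Real.sqrt (g * (ω ^ 2 - 1)), 0;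
     0, (g - 1) * μ + g * ω, 0, -Real.sqrt (g * (ω ^ 2 - 1));
     Real.sqrt (g * (ω ^ 2 - 1)), 0, ω, 0;
     0, -Real.sqrt (g * (ω ^ 2 - 1)), 0, ω]

/-- The DR conditioning vector `u(μ) = (√((g−1)η(μ²−1)), 0, 0, 0)ᵀ`. -/
noncomputable def uDR (g η μ : ℝ) : Fin 4 → ℝ :=
  ![Real.sqrt ((g - 1) * η * (μ ^ 2 - 1)), 0, 0, 0]

/-- Eve's conditional covariance matrix after Alice's `q`-homodyne:
`M(μ) = V_{E′e}(μ) − (1/(ημ+(1−η)γ))·u(μ)u(μ)ᵀ`. -/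
noncomputable def Mdr (g ω γ η μ : ℝ) : Matrix (Fin 4) (Fin 4) ℝ :=
  VEe g ω μ - (η * μ + (1 - η) * γ)⁻¹ • Matrix.vecMulVec (uDR g η μ) (uDR g η μ)

/-- The bosonic entropy function. -/
noncomputable def h (x : ℝ) : ℝ :=
  ((x + 1) / 2) * Real.logb 2 ((x + 1) / 2) - ((x - 1) / 2) * Real.logb 2 ((x - 1) / 2)

/-- `Δ(μ)` for Eve's total covariance matrix `V_{E′e}(μ)`. -/
noncomputable def Delta (g ω μ : ℝ) : ℝ :=
  ((g - 1) * μ + g * ω) ^ 2 + ω ^ 2 - 2 * (g * (ω ^ 2 - 1))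

/-- `D(μ)` for Eve's total covariance matrix `V_{E′e}(μ)`. -/
noncomputable def Dprod (g ω μ : ℝ) : ℝ :=
  (((g - 1) * μ + g * ω) * ω - g * (ω ^ 2 - 1)) ^ 2

/-- The larger symplectic eigenvalue of `V_{E′e}(μ)`. -/
noncomputable def nu1 (g ω μ : ℝ) : ℝ :=
  Real.sqrt ((Delta g ω μ + Real.sqrt ((Delta g ω μ) ^ 2 - 4 * Dprod g ω μ)) / 2)

/-- The smaller symplectic eigenvalue of `V_{E′e}(μ)`. -/
noncomputable def nu2 (g ω μ : ℝ) : ℝ :=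
  Real.sqrt ((Delta g ω μ - Real.sqrt ((Delta g ω μ) ^ 2 - 4 * Dprod g ω μ)) / 2)

/-- The closed-form DR rate `R▶(g, ω, η, γ)` of Theorem 1. -/
noncomputable def Rdr (g ω η γ : ℝ) : ℝ :=
  (1 / 2) * Real.logb 2
      (g * (g * η * ω + γ * (g - 1) * (1 - η)) /
        ((g - 1) * (g * γ * (1 - η) + η * ω * (g - 1))))
    + h (Real.sqrt (ω * (g * η + γ * ω * (g - 1) * (1 - η)) /
        (g * η * ω + γ * (g - 1) * (1 - η))))
    - h ω

/-!
Both covariance matrices have one symplectic eigenvalue that diverges and one that converges.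
Since `h x = log₂ x + log₂ (e / 2) + o(1)`, the divergent entropies `h ν̄₁ - h ν₁` combine with
`I_AB` into `½ log₂ (V_A ν̄₁² / ((V_A - t) ν₁²))` up to `o(1)`; here `V_A ~ ημ`, `V_A - t` and
`ν̄₁² / μ` converge and `ν₁² ~ (g - 1)² μ²`, so the argument converges to `keyRatioLimit`.
The bounded eigenvalues converge (to `ω` and `√condSmallRootLimit`) and `h` is continuous there.
The squared eigenvalues are the roots of `Y² - ΔY + D`; the small one is `D / largeRoot`, which
stays bounded because `Δ` and `D` grow at the same rate.
-/

open Topology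

theorem tendsto_affine_div_affine_atTop (a b c d : ℝ) (hc : 0 < c) :
    Tendsto (fun x => (a * x + b) / (c * x + d)) atTop (𝓝 (a / c)) := by
  have hlim : Tendsto (fun x : ℝ => (a + b * x⁻¹) / (c + d * x⁻¹)) atTop (𝓝 (a / c)) := by
    have hnum : Tendsto (fun x : ℝ => a + b * x⁻¹) atTop (𝓝 a) := by
      simpa using (tendsto_inv_atTop_zero.const_mul b).const_add a
    have hden : Tendsto (fun x : ℝ => c + d * x⁻¹) atTop (𝓝 c) := by
      simpa using (tendsto_inv_atTop_zero.const_mul d).const_add c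
    exact hnum.div hden hc.ne'
  refine hlim.congr' ?_
  filter_upwards [eventually_gt_atTop 0] with x hx
  field_simp

theorem tendsto_affine_div_id_atTop (a b : ℝ) :
    Tendsto (fun x => (a * x + b) / x) atTop (𝓝 a) := by
  simpa using tendsto_affine_div_affine_atTop a b 1 0 one_pos

theorem continuousAt_h {x : ℝ} (hx : 1 < x) : ContinuousAt h x := by
  unfold h
  have hplus : (x + 1) / 2 ≠ 0 := by positivity
  have hminus : (x - 1) / 2 ≠ 0 := by linarith [show 0 < (x - 1) / 2 by linarith]
  fun_prop (disch := assumption)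

theorem tendsto_h_sub_logb_atTop :
    Tendsto (fun x => h x - logb 2 x) atTop (𝓝 ((1 - log 2) / log 2)) := by
  have hmain : Tendsto (fun x : ℝ => (x - 1) / 2 * log (1 + 2 / (x - 1))) atTop (𝓝 1) := by
    have := ((tendsto_mul_log_one_add_div_atTop 2).comp
      (tendsto_atTop_add_const_right atTop (-1) tendsto_id)).div_const 2
    norm_num at this
    refine this.congr fun x => ?_
    simp only [sub_eq_add_neg]
    ring
  have hsmall : Tendsto (fun x : ℝ => log (1 + x⁻¹)) atTop (𝓝 0) := by
    have harg := tendsto_inv_atTop_zero.const_add (1 : ℝ)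
    rw [add_zero] at harg
    have hlog := (continuousAt_log one_ne_zero).tendsto.comp harg
    rwa [log_one] at hlog
  have hlim := ((hmain.add hsmall).sub_const (log 2)).div_const (log 2)
  rw [add_zero] at hlim
  refine hlim.congr' ?_
  filter_upwards [eventually_gt_atTop 1] with x hx
  have hx0 : 0 < x := by linarith
  have hx1 : 0 < x - 1 := by linarith
  have e1 : 1 + 2 / (x - 1) = (x + 1) / (x - 1) := by field_simp; ring
  have e2 : 1 + x⁻¹ = (x + 1) / x := by field_simp
  simp only [h, logb, e1, e2]
  rw [log_div (by positivity) two_ne_zero, log_div hx1.ne' two_ne_zero,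
    log_div (by positivity) hx1.ne', log_div (by positivity) hx0.ne']
  field_simp
  ring

theorem tendsto_half_logb_add_h_sqrt_sub_h_sqrt {α : Type*} {l : Filter α} {f N N' : α → ℝ}
    {L : ℝ} (hL : 0 < L) (hN : Tendsto N l atTop) (hN' : Tendsto N' l atTop)
    (hf : Tendsto (fun x => f x * (N' x / N x)) l (𝓝 L)) :
    Tendsto (fun x => 1 / 2 * logb 2 (f x) + (h √(N' x) - h √(N x))) l
      (𝓝 (1 / 2 * logb 2 L)) := by
  have hentropy {M : α → ℝ} (hM : Tendsto M l atTop) :=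
    tendsto_h_sub_logb_atTop.comp (tendsto_sqrt_atTop.comp hM)
  have hlim := (((continuousAt_logb (b := 2) hL.ne').tendsto.comp hf).const_mul (1 / 2)).add
    ((hentropy hN').sub (hentropy hN))
  rw [sub_self, add_zero] at hlim
  refine hlim.congr' ?_
  filter_upwards [hN.eventually_gt_atTop 0, hN'.eventually_gt_atTop 0,
    hf.eventually_ne hL.ne'] with x hNx hN'x hfx
  have hf0 : f x ≠ 0 := left_ne_zero_of_mul hfx
  simp only [Function.comp_apply, logb, log_sqrt hNx.le, log_sqrt hN'x.le,
    log_mul hf0 (div_ne_zero hN'x.ne' hNx.ne'), log_div hN'x.ne' hNx.ne']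
  ring

/-- The roots of `Y² - ΔY + D`: when `charpoly (Ω₂ M) = X⁴ + ΔX² + D`, these are the squared
symplectic eigenvalues of `M`. -/
noncomputable def largeRoot (Δ D : ℝ) : ℝ := (Δ + √(Δ ^ 2 - 4 * D)) / 2

noncomputable def smallRoot (Δ D : ℝ) : ℝ := (Δ - √(Δ ^ 2 - 4 * D)) / 2

theorem smallRoot_mul_largeRoot {Δ D : ℝ} (hdisc : 0 ≤ Δ ^ 2 - 4 * D) :
    smallRoot Δ D * largeRoot Δ D = D := by
  unfold smallRoot largeRoot
  nlinarith [sq_sqrt hdisc]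

section RootAsymptotics

variable {α : Type*} {l : Filter α} {Δ D φ : α → ℝ} {d q : ℝ}

theorem tendsto_sqrt_discrim_div (hφ : Tendsto φ l atTop)
    (hΔ : Tendsto (fun x => Δ x / φ x) l (𝓝 d)) (hD : Tendsto (fun x => D x / φ x) l (𝓝 q)) :
    Tendsto (fun x => √(Δ x ^ 2 - 4 * D x) / φ x) l (𝓝 |d|) := by
  have hdisc : Tendsto (fun x => (Δ x / φ x) ^ 2 - 4 * (D x / φ x) * (φ x)⁻¹) l
      (𝓝 (d ^ 2 - 4 * q * 0)) :=
    (hΔ.pow 2).sub ((hD.const_mul 4).mul hφ.inv_tendsto_atTop)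
  rw [mul_zero, sub_zero, ← sqrt_sq_eq_abs] at *
  refine ((continuous_sqrt.tendsto _).comp hdisc).congr' ?_
  filter_upwards [hφ.eventually_gt_atTop 0] with x hx
  have hrescale : (Δ x / φ x) ^ 2 - 4 * (D x / φ x) * (φ x)⁻¹ = (Δ x ^ 2 - 4 * D x) / φ x ^ 2 := by
    field_simp
  rw [Function.comp_apply, hrescale, sqrt_div' _ (sq_nonneg _), sqrt_sq hx.le]

theorem tendsto_largeRoot_div (hd : 0 ≤ d) (hφ : Tendsto φ l atTop)
    (hΔ : Tendsto (fun x => Δ x / φ x) l (𝓝 d)) (hD : Tendsto (fun x => D x / φ x) l (𝓝 q)) :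
    Tendsto (fun x => largeRoot (Δ x) (D x) / φ x) l (𝓝 d) := by
  have hsum := (hΔ.add (tendsto_sqrt_discrim_div hφ hΔ hD)).div_const 2
  rw [abs_of_nonneg hd, add_self_div_two] at hsum
  refine hsum.congr fun x => ?_
  rw [largeRoot]
  ring

theorem tendsto_largeRoot_atTop (hd : 0 < d) (hφ : Tendsto φ l atTop)
    (hΔ : Tendsto (fun x => Δ x / φ x) l (𝓝 d)) (hD : Tendsto (fun x => D x / φ x) l (𝓝 q)) :
    Tendsto (fun x => largeRoot (Δ x) (D x)) l atTop := by
  refine ((tendsto_largeRoot_div hd.le hφ hΔ hD).pos_mul_atTop hd hφ).congr' ?_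
  filter_upwards [hφ.eventually_gt_atTop 0] with x hx
  exact div_mul_cancel₀ _ hx.ne'

theorem tendsto_smallRoot (hd : 0 < d) (hφ : Tendsto φ l atTop)
    (hΔ : Tendsto (fun x => Δ x / φ x) l (𝓝 d)) (hD : Tendsto (fun x => D x / φ x) l (𝓝 q)) :
    Tendsto (fun x => smallRoot (Δ x) (D x)) l (𝓝 (q / d)) := by
  refine (hD.div (tendsto_largeRoot_div hd.le hφ hΔ hD) hd.ne').congr' ?_
  have hsqrt := (tendsto_sqrt_discrim_div hφ hΔ hD).eventually_const_lt (abs_pos.mpr hd.ne')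
  filter_upwards [hφ.eventually_gt_atTop 0, hsqrt,
    (tendsto_largeRoot_atTop hd hφ hΔ hD).eventually_gt_atTop 0] with x hφx hsqrtx hlarge
  have hdisc : 0 < Δ x ^ 2 - 4 * D x := sqrt_pos.mp ((div_pos_iff_of_pos_right hφx).mp hsqrtx)
  rw [Pi.div_apply, div_div_div_cancel_right₀ hφx.ne', div_eq_iff hlarge.ne',
    smallRoot_mul_largeRoot hdisc.le]

end RootAsymptotics

theorem charpoly_Omega2_mul (p q r s : ℝ) :
    (Omega2 * !![p, 0, r, 0; 0, q, 0, -r; r, 0, s, 0; 0, -r, 0, s]).charpoly =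
      X ^ 4 + C (p * q + s ^ 2 - 2 * r ^ 2) * X ^ 2 + C ((p * s - r ^ 2) * (q * s - r ^ 2)) := by
  have hprod : Omega2 * !![p, 0, r, 0; 0, q, 0, -r; r, 0, s, 0; 0, -r, 0, s] =
      !![0, q, 0, -r; -p, 0, -r, 0; 0, -r, 0, s; -r, 0, -s, 0] := by
    ext i j
    fin_cases i <;> fin_cases j <;> simp [Omega2, mul_apply, Fin.sum_univ_four]
  have hcharmatrix : charmatrix (!![0, q, 0, -r; -p, 0, -r, 0; 0, -r, 0, s; -r, 0, -s, 0] :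
      Matrix (Fin 4) (Fin 4) ℝ) =
      !![X, -C q, 0, C r; C p, X, C r, 0; 0, C r, X, -C s; C r, 0, C s, X] := by
    ext i j
    fin_cases i <;> fin_cases j <;> simp [charmatrix_apply_eq, charmatrix_apply_ne]
  rw [hprod, charpoly, hcharmatrix]
  simp [det_succ_row_zero, Fin.sum_univ_succ, submatrix, Fin.succAbove, map_ofNat]
  ring

theorem biquadratic_coeffs_eq_of_eq {R : Type*} [Semiring R] {a b a' b' : R}
    (h : (X ^ 4 + C a * X ^ 2 + C b : R[X]) = X ^ 4 + C a' * X ^ 2 + C b') :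
    a = a' ∧ b = b' := by
  constructor
  · simpa [coeff_X_pow, coeff_C] using congrArg (coeff · 2) h
  · simpa [coeff_X_pow, coeff_C] using congrArg (coeff · 0) h

/-- `Rdr g ω η γ = ½ log₂ (keyRatioLimit g ω η γ) + h √(condSmallRootLimit g ω η γ) - h ω`, where
`keyRatioLimit = lim V_A ν̄₁² / ((V_A - t) ν₁²)` and `condSmallRootLimit = lim ν̄₂²`. -/
noncomputable def keyRatioLimit (g ω η γ : ℝ) : ℝ :=
  g * (g * η * ω + γ * (g - 1) * (1 - η)) / ((g - 1) * (g * γ * (1 - η) + η * ω * (g - 1)))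

noncomputable def condSmallRootLimit (g ω η γ : ℝ) : ℝ :=
  ω * (g * η + γ * ω * (g - 1) * (1 - η)) / (g * η * ω + γ * (g - 1) * (1 - η))

section DirectReconciliation

variable (g ω γ η : ℝ)

noncomputable def condEntry (μ : ℝ) : ℝ :=
  (g - 1) * μ + g * ω - (η * μ + (1 - η) * γ)⁻¹ * ((g - 1) * η * (μ ^ 2 - 1))

noncomputable def DeltaCond (μ : ℝ) : ℝ :=
  condEntry g ω γ η μ * ((g - 1) * μ + g * ω) + ω ^ 2 - 2 * (g * (ω ^ 2 - 1))

noncomputable def DprodCond (μ : ℝ) : ℝ :=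
  (condEntry g ω γ η μ * ω - g * (ω ^ 2 - 1)) * (((g - 1) * μ + g * ω) * ω - g * (ω ^ 2 - 1))

theorem Mdr_eq {μ : ℝ} (hk : 0 ≤ (g - 1) * η * (μ ^ 2 - 1)) :
    Mdr g ω γ η μ =
      !![condEntry g ω γ η μ, 0, √(g * (ω ^ 2 - 1)), 0;
         0, (g - 1) * μ + g * ω, 0, -√(g * (ω ^ 2 - 1));
         √(g * (ω ^ 2 - 1)), 0, ω, 0;
         0, -√(g * (ω ^ 2 - 1)), 0, ω] := by
  ext i j
  fin_cases i <;> fin_cases j <;>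
    simp [Mdr, VEe, uDR, condEntry, mul_self_sqrt hk]

theorem charpoly_Omega2_mul_Mdr (hg : 1 ≤ g) (hω : 1 ≤ ω) (hη : 0 ≤ η) {μ : ℝ} (hμ : 1 ≤ μ) :
    (Omega2 * Mdr g ω γ η μ).charpoly =
      X ^ 4 + C (DeltaCond g ω γ η μ) * X ^ 2 + C (DprodCond g ω γ η μ) := by
  have hg₁ := sub_nonneg.mpr hg
  have hω₁ : 0 ≤ ω ^ 2 - 1 := by nlinarith
  have hμ₁ : 0 ≤ μ ^ 2 - 1 := by nlinarith
  rw [Mdr_eq g ω γ η (by positivity), charpoly_Omega2_mul, sq_sqrt (by positivity), DeltaCond,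
    DprodCond]

theorem tendsto_condEntry (hη : 0 < η) :
    Tendsto (condEntry g ω γ η) atTop (𝓝 ((g * η * ω + (g - 1) * (1 - η) * γ) / η)) := by
  refine (tendsto_affine_div_affine_atTop _ (g * ω * (1 - η) * γ + (g - 1) * η) η
    ((1 - η) * γ) hη).congr' ?_
  have hVA : Tendsto (fun μ => η * μ + (1 - η) * γ) atTop atTop :=
    tendsto_atTop_add_const_right _ _ (tendsto_id.const_mul_atTop hη)
  filter_upwards [hVA.eventually_gt_atTop 0] with μ hμ
  rw [condEntry]
  field_simp
  ring

theorem tendsto_blockDet_div :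
    Tendsto (fun μ => (((g - 1) * μ + g * ω) * ω - g * (ω ^ 2 - 1)) / μ) atTop
      (𝓝 ((g - 1) * ω)) :=
  (tendsto_affine_div_id_atTop _ (g * ω * ω - g * (ω ^ 2 - 1))).congr fun μ => by ring_nf

theorem tendsto_DeltaCond_div (hη : 0 < η) :
    Tendsto (fun μ => DeltaCond g ω γ η μ / μ) atTop
      (𝓝 ((g * η * ω + (g - 1) * (1 - η) * γ) / η * (g - 1))) := by
  have hlim := ((tendsto_condEntry g ω γ η hη).mul (tendsto_affine_div_id_atTop (g - 1) (g * ω))).add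
    (tendsto_inv_atTop_zero.const_mul (ω ^ 2 - 2 * (g * (ω ^ 2 - 1))))
  rw [mul_zero, add_zero] at hlim
  refine hlim.congr' ?_
  filter_upwards [eventually_gt_atTop 0] with μ hμ
  rw [DeltaCond]
  field_simp
  ring

theorem tendsto_DprodCond_div (hη : 0 < η) :
    Tendsto (fun μ => DprodCond g ω γ η μ / μ) atTop
      (𝓝 (((g * η * ω + (g - 1) * (1 - η) * γ) / η * ω - g * (ω ^ 2 - 1)) * ((g - 1) * ω))) :=
  (((tendsto_condEntry g ω γ η hη).mul_const ω).sub_const _).mul (tendsto_blockDet_div g ω)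
    |>.congr fun μ => by rw [DprodCond, mul_div_assoc]

theorem tendsto_Delta_div_sq :
    Tendsto (fun μ => Delta g ω μ / μ ^ 2) atTop (𝓝 ((g - 1) ^ 2)) := by
  have hlim := ((tendsto_affine_div_id_atTop (g - 1) (g * ω)).pow 2).add
    ((tendsto_inv_atTop_zero.comp (tendsto_pow_atTop two_ne_zero)).const_mul
      (ω ^ 2 - 2 * (g * (ω ^ 2 - 1))))
  rw [mul_zero, add_zero] at hlim
  refine hlim.congr' ?_
  filter_upwards [eventually_gt_atTop 0] with μ hμ
  rw [Function.comp_apply, Delta]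
  field_simp
  ring

theorem tendsto_Dprod_div_sq :
    Tendsto (fun μ => Dprod g ω μ / μ ^ 2) atTop (𝓝 (((g - 1) * ω) ^ 2)) :=
  ((tendsto_blockDet_div g ω).pow 2).congr fun μ => by rw [Dprod, div_pow]

theorem tendsto_largeRoot_Delta_div_sq :
    Tendsto (fun μ => largeRoot (Delta g ω μ) (Dprod g ω μ) / μ ^ 2) atTop (𝓝 ((g - 1) ^ 2)) :=
  tendsto_largeRoot_div (sq_nonneg _) (tendsto_pow_atTop two_ne_zero) (tendsto_Delta_div_sq g ω)
    (tendsto_Dprod_div_sq g ω)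

theorem tendsto_largeRoot_Delta_atTop (hg : g ≠ 1) :
    Tendsto (fun μ => largeRoot (Delta g ω μ) (Dprod g ω μ)) atTop atTop := by
  have hg₁ := sub_ne_zero.mpr hg
  exact tendsto_largeRoot_atTop (by positivity) (tendsto_pow_atTop two_ne_zero)
    (tendsto_Delta_div_sq g ω) (tendsto_Dprod_div_sq g ω)

theorem tendsto_largeRoot_DeltaCond_div (hg : 1 ≤ g) (hω : 0 < ω) (hγ : 0 ≤ γ) (hη₀ : 0 < η)
    (hη₁ : η ≤ 1) :
    Tendsto (fun μ => largeRoot (DeltaCond g ω γ η μ) (DprodCond g ω γ η μ) / μ) atTop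
      (𝓝 ((g * η * ω + (g - 1) * (1 - η) * γ) / η * (g - 1))) := by
  have hg₁ := sub_nonneg.mpr hg
  have hη₁' := sub_nonneg.mpr hη₁
  exact tendsto_largeRoot_div (by positivity) tendsto_id (tendsto_DeltaCond_div g ω γ η hη₀)
    (tendsto_DprodCond_div g ω γ η hη₀)

theorem tendsto_largeRoot_DeltaCond_atTop (hg : 1 < g) (hω : 0 < ω) (hγ : 0 ≤ γ) (hη₀ : 0 < η)
    (hη₁ : η ≤ 1) :
    Tendsto (fun μ => largeRoot (DeltaCond g ω γ η μ) (DprodCond g ω γ η μ)) atTop atTop := by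
  have hg₁ := sub_pos.mpr hg
  have hη₁' := sub_nonneg.mpr hη₁
  exact tendsto_largeRoot_atTop (by positivity) tendsto_id (tendsto_DeltaCond_div g ω γ η hη₀)
    (tendsto_DprodCond_div g ω γ η hη₀)

theorem tendsto_IAB_denominator (hg : 0 < g) :
    Tendsto (fun μ => η * μ + (1 - η) * γ - g * η * (μ ^ 2 - 1) / (g * μ + (g - 1) * ω)) atTop
      (𝓝 ((η * (g - 1) * ω + g * (1 - η) * γ) / g)) := by
  refine (tendsto_affine_div_affine_atTop _ ((1 - η) * γ * (g - 1) * ω + g * η) g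
    ((g - 1) * ω) hg).congr' ?_
  have hden : Tendsto (fun μ => g * μ + (g - 1) * ω) atTop atTop :=
    tendsto_atTop_add_const_right _ _ (tendsto_id.const_mul_atTop hg)
  filter_upwards [hden.eventually_gt_atTop 0] with μ hμ
  field_simp
  ring

theorem tendsto_keyRatio (hg : 1 < g) (hω : 0 < ω) (hγ : 0 ≤ γ) (hη₀ : 0 < η) (hη₁ : η ≤ 1) :
    Tendsto (fun μ => (η * μ + (1 - η) * γ) /
        (η * μ + (1 - η) * γ - g * η * (μ ^ 2 - 1) / (g * μ + (g - 1) * ω)) *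
        (largeRoot (DeltaCond g ω γ η μ) (DprodCond g ω γ η μ) /
          largeRoot (Delta g ω μ) (Dprod g ω μ)))
      atTop (𝓝 (keyRatioLimit g ω η γ)) := by
  have hg₁ := sub_pos.mpr hg
  have hη₁' := sub_nonneg.mpr hη₁
  have hW : 0 < (η * (g - 1) * ω + g * (1 - η) * γ) / g := by positivity
  have hdenom := tendsto_IAB_denominator g ω γ η (by linarith)
  have hlim := ((tendsto_affine_div_id_atTop η ((1 - η) * γ)).mul
    (tendsto_largeRoot_DeltaCond_div g ω γ η hg.le hω hγ hη₀ hη₁)).div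
    (hdenom.mul (tendsto_largeRoot_Delta_div_sq g ω)) (by positivity)
  have hval : η * ((g * η * ω + (g - 1) * (1 - η) * γ) / η * (g - 1)) /
      ((η * (g - 1) * ω + g * (1 - η) * γ) / g * (g - 1) ^ 2) = keyRatioLimit g ω η γ := by
    rw [keyRatioLimit]
    field_simp
    ring
  rw [hval] at hlim
  refine hlim.congr' ?_
  filter_upwards [eventually_gt_atTop 0, hdenom.eventually_const_lt hW,
    (tendsto_largeRoot_Delta_atTop g ω hg.ne').eventually_gt_atTop 0] with μ hμ hdenomμ hlargeμ
  simp only [Pi.div_apply]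
  field_simp

theorem tendsto_condSmallRoot (hg : 1 < g) (hω : 0 < ω) (hγ : 0 ≤ γ) (hη₀ : 0 < η) (hη₁ : η ≤ 1) :
    Tendsto (fun μ => smallRoot (DeltaCond g ω γ η μ) (DprodCond g ω γ η μ)) atTop
      (𝓝 (condSmallRootLimit g ω η γ)) := by
  have hg₁ := sub_pos.mpr hg
  have hη₁' := sub_nonneg.mpr hη₁
  convert tendsto_smallRoot (by positivity) tendsto_id
    (tendsto_DeltaCond_div g ω γ η hη₀) (tendsto_DprodCond_div g ω γ η hη₀) using 2
  rw [condSmallRootLimit]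
  field_simp
  ring

theorem tendsto_nu2 (hg : g ≠ 1) (hω : 0 ≤ ω) : Tendsto (nu2 g ω) atTop (𝓝 ω) := by
  have hsmall := tendsto_smallRoot (by have := sub_ne_zero.mpr hg; positivity)
    (tendsto_pow_atTop two_ne_zero) (tendsto_Delta_div_sq g ω) (tendsto_Dprod_div_sq g ω)
  rw [mul_pow, mul_div_cancel_left₀ _ (pow_ne_zero 2 (sub_ne_zero.mpr hg))] at hsmall
  have hnu2 := (continuous_sqrt.tendsto _).comp hsmall
  rwa [sqrt_sq hω] at hnu2

theorem keyRatioLimit_pos (hg : 1 < g) (hω : 0 < ω) (hγ : 0 ≤ γ) (hη₀ : 0 < η) (hη₁ : η ≤ 1) :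
    0 < keyRatioLimit g ω η γ := by
  have hg₁ := sub_pos.mpr hg
  have hη₁' := sub_nonneg.mpr hη₁
  have hg₀ : 0 < g := by linarith
  unfold keyRatioLimit
  positivity

theorem one_lt_condSmallRootLimit (hg : 1 < g) (hω : 1 < ω) (hγ : 0 < γ) (hη₀ : 0 < η)
    (hη₁ : η < 1) : 1 < condSmallRootLimit g ω η γ := by
  have hg₁ := sub_pos.mpr hg
  have hη₁' := sub_pos.mpr hη₁
  have hω₁ := sub_pos.mpr hω
  have hg₀ : 0 < g := by linarith
  rw [condSmallRootLimit, one_lt_div (by positivity)]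
  nlinarith [mul_pos (mul_pos (mul_pos hγ hg₁) hη₁') hω₁]

end DirectReconciliation

/-- Theorem 1 (DR): the finite-modulation key rate `I_AB(μ) − χ_AE(μ)` converges to
the closed form `R▶(g, ω, η, γ)` as `μ → ∞`. -/
theorem key_rate_limit_DR (g ω γ η : ℝ)
    (hg : 1 < g) (hω : 1 < ω) (hγ : 1 ≤ γ) (hη : η ∈ Set.Ioo (0 : ℝ) 1)
    (Δb Db : ℝ → ℝ)
    (hchar : ∀ μ : ℝ, 1 < μ →
      Matrix.charpoly (Omega2 * Mdr g ω γ η μ) =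
        X ^ 4 + C (Δb μ) * X ^ 2 + C (Db μ)) :
    Filter.Tendsto
      (fun μ : ℝ =>
        (1 / 2) * Real.logb 2
            ((η * μ + (1 - η) * γ) /
              ((η * μ + (1 - η) * γ) - g * η * (μ ^ 2 - 1) / (g * μ + (g - 1) * ω)))
          - ((h (nu1 g ω μ) + h (nu2 g ω μ))
              - (h (Real.sqrt ((Δb μ + Real.sqrt ((Δb μ) ^ 2 - 4 * Db μ)) / 2))
                + h (Real.sqrt ((Δb μ - Real.sqrt ((Δb μ) ^ 2 - 4 * Db μ)) / 2)))))
      Filter.atTop (nhds (Rdr g ω η γ)) := by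
  obtain ⟨hη₀, hη₁⟩ := hη
  have hγ₀ : 0 < γ := by linarith
  have hω₀ : 0 < ω := by linarith
  have hlarge := tendsto_half_logb_add_h_sqrt_sub_h_sqrt
    (keyRatioLimit_pos g ω γ η hg hω₀ hγ₀.le hη₀ hη₁.le) (tendsto_largeRoot_Delta_atTop g ω hg.ne')
    (tendsto_largeRoot_DeltaCond_atTop g ω γ η hg hω₀ hγ₀.le hη₀ hη₁.le)
    (tendsto_keyRatio g ω γ η hg hω₀ hγ₀.le hη₀ hη₁.le)
  have hsmallCond := (continuousAt_h (lt_sqrt_of_sq_lt (by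
    simpa using one_lt_condSmallRootLimit g ω γ η hg hω hγ₀ hη₀ hη₁))).tendsto.comp
    ((continuous_sqrt.tendsto _).comp (tendsto_condSmallRoot g ω γ η hg hω₀ hγ₀.le hη₀ hη₁.le))
  have hsmall := (continuousAt_h hω).tendsto.comp (tendsto_nu2 g ω hg.ne' hω₀.le)
  refine ((hlarge.add hsmallCond).sub hsmall).congr' ?_
  filter_upwards [eventually_gt_atTop 1] with μ hμ
  obtain ⟨hΔ, hD⟩ := biquadratic_coeffs_eq_of_eq
    ((charpoly_Omega2_mul_Mdr g ω γ η hg.le hω.le hη₀.le hμ.le).symm.trans (hchar μ hμ))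
  simp only [Function.comp_apply, ← hΔ, ← hD, nu1, nu2, largeRoot, smallRoot]
  ring
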